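/- arXiv:2604.16002 — 2 statements merged into one kernel-verified Lean document; each statement's English description precedes it below -/
import Mathlib

section
/- Let λ ∈ ℂ with |λ| < 1 and let (aₙ) be a complex sequence satisfying Σ|aₙ|² = ∞ and max_{1≤n≤N}|aₙ| / (Σ_{n=1}^N |aₙ|²)^{1/2} → 0. Define bₙ = Σ_{k=1}^n λ^{n−k} a_k. Then liminf_{N→∞} (Σ_{n=1}^N |bₙ|²)^{1/2} / (Σ_{n=1}^N |aₙ|²)^{1/2} ≥ 1/(1+|λ|). -/
/-!
With `b 0 = 0` the definition of `b` gives `a n = b n - λ b (n - 1)` for `n ≥ 1`, i.e. on every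
initial segment `a = (I - λS) b` for the right shift `S`, which does not increase the `ℓ²` norm.
The triangle inequality gives `(1 - |λ|) ‖b‖ ≤ ‖a‖ ≤ (1 + |λ|) ‖b‖` for every partial `ℓ²` norm.
The right inequality is the claimed bound once `a` has a nonzero term; the left one bounds the
ratio above, which Lean's `liminf` needs in order not to take a junk value.
-/

open Filter Finset

section l2NormOn

variable {ι 𝕜 : Type*} [RCLike 𝕜]

noncomputable def l2NormOn (s : Finset ι) (f : ι → 𝕜) : ℝ := √(∑ i ∈ s, ‖f i‖ ^ 2)

variable {s t : Finset ι} {f g : ι → 𝕜}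

lemma l2NormOn_nonneg : 0 ≤ l2NormOn s f := Real.sqrt_nonneg _

lemma l2NormOn_eq_norm_toLp :
    l2NormOn s f = ‖(WithLp.toLp 2 (fun i : s => f i) : EuclideanSpace 𝕜 s)‖ := by
  rw [EuclideanSpace.norm_eq, sum_coe_sort s (fun i => ‖f i‖ ^ 2)]
  rfl

lemma l2NormOn_add_le : l2NormOn s (fun i => f i + g i) ≤ l2NormOn s f + l2NormOn s g := by
  simp only [l2NormOn_eq_norm_toLp]
  exact norm_add_le (WithLp.toLp 2 (fun i : s => f i) : EuclideanSpace 𝕜 s)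
    (WithLp.toLp 2 fun i : s => g i)

lemma l2NormOn_const_mul (c : 𝕜) : l2NormOn s (fun i => c * f i) = ‖c‖ * l2NormOn s f := by
  simp only [l2NormOn_eq_norm_toLp, ← norm_smul]
  rfl

lemma l2NormOn_mono (h : s ⊆ t) : l2NormOn s f ≤ l2NormOn t f :=
  Real.sqrt_le_sqrt (sum_le_sum_of_subset_of_nonneg h fun _ _ _ => sq_nonneg _)

lemma l2NormOn_congr (h : ∀ i ∈ s, f i = g i) : l2NormOn s f = l2NormOn s g := by
  unfold l2NormOn
  rw [sum_congr rfl fun i hi => by rw [h i hi]]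

lemma l2NormOn_pos {i : ι} (hi : i ∈ s) (hf : f i ≠ 0) : 0 < l2NormOn s f :=
  Real.sqrt_pos.mpr <| lt_of_lt_of_le (by positivity)
    (single_le_sum (f := fun i => ‖f i‖ ^ 2) (fun _ _ => sq_nonneg _) hi)

end l2NormOn

lemma l2NormOn_Icc_comp_sub_one_le {𝕜 : Type*} [RCLike 𝕜] {f : ℕ → 𝕜} (hf : f 0 = 0) (N : ℕ) :
    l2NormOn (Icc 1 (N + 1)) (fun n => f (n - 1)) ≤ l2NormOn (Icc 1 (N + 1)) f :=
  calc l2NormOn (Icc 1 (N + 1)) (fun n => f (n - 1)) = l2NormOn (Icc 1 N) f := by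
        unfold l2NormOn
        rw [← zero_add 1, ← map_add_right_Icc, sum_map, ← insert_Icc_add_one_left_eq_Icc N.zero_le,
          sum_insert (by simp)]
        simp [hf]
    _ ≤ l2NormOn (Icc 1 (N + 1)) f := l2NormOn_mono (Icc_subset_Icc_right N.le_succ)

lemma sum_Icc_pow_sub_mul_succ {R : Type*} [CommSemiring R] (lam : R) (a : ℕ → R) (n : ℕ) :
    ∑ k ∈ Icc 1 (n + 1), lam ^ (n + 1 - k) * a k
      = lam * ∑ k ∈ Icc 1 n, lam ^ (n - k) * a k + a (n + 1) := by
  rw [sum_Icc_succ_top (Nat.le_add_left 1 n), mul_sum, Nat.sub_self, pow_zero, one_mul]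
  congr 1
  refine sum_congr rfl fun k hk => ?_
  rw [← mul_assoc, ← pow_succ', Nat.sub_add_comm (mem_Icc.mp hk).2]

section firstDifference

variable {𝕜 : Type*} [RCLike 𝕜] (lam : 𝕜) {b : ℕ → 𝕜} (hb0 : b 0 = 0) (N : ℕ)
include hb0

lemma l2NormOn_sub_mul_le :
    l2NormOn (Icc 1 (N + 1)) (fun n => b n - lam * b (n - 1))
      ≤ (1 + ‖lam‖) * l2NormOn (Icc 1 (N + 1)) b := by
  calc l2NormOn (Icc 1 (N + 1)) (fun n => b n - lam * b (n - 1))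
      = l2NormOn (Icc 1 (N + 1)) (fun n => b n + -lam * b (n - 1)) := by
        simp only [neg_mul, sub_eq_add_neg]
    _ ≤ l2NormOn (Icc 1 (N + 1)) b + l2NormOn (Icc 1 (N + 1)) (fun n => -lam * b (n - 1)) :=
        l2NormOn_add_le
    _ ≤ l2NormOn (Icc 1 (N + 1)) b + ‖lam‖ * l2NormOn (Icc 1 (N + 1)) b := by
        rw [l2NormOn_const_mul, norm_neg]
        gcongr
        exact l2NormOn_Icc_comp_sub_one_le hb0 N
    _ = (1 + ‖lam‖) * l2NormOn (Icc 1 (N + 1)) b := by ring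

lemma one_sub_mul_l2NormOn_le :
    (1 - ‖lam‖) * l2NormOn (Icc 1 (N + 1)) b
      ≤ l2NormOn (Icc 1 (N + 1)) (fun n => b n - lam * b (n - 1)) := by
  have hb_le : l2NormOn (Icc 1 (N + 1)) b
      ≤ l2NormOn (Icc 1 (N + 1)) (fun n => b n - lam * b (n - 1))
        + ‖lam‖ * l2NormOn (Icc 1 (N + 1)) b :=
    calc l2NormOn (Icc 1 (N + 1)) b
        = l2NormOn (Icc 1 (N + 1)) (fun n => (b n - lam * b (n - 1)) + lam * b (n - 1)) := by
          simp only [sub_add_cancel]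
      _ ≤ _ := l2NormOn_add_le
      _ ≤ _ := by
          rw [l2NormOn_const_mul]
          gcongr
          exact l2NormOn_Icc_comp_sub_one_le hb0 N
  linarith

end firstDifference

theorem stmt_5_general (lam : ℂ) (hlam : ‖lam‖ < 1) (a b : ℕ → ℂ)
    (hb : ∀ n, b n = ∑ k ∈ Finset.Icc 1 n, lam ^ (n - k) * a k)
    (ha : ¬ Summable (fun n => ‖a (n + 1)‖ ^ 2)) :
    1 / (1 + ‖lam‖) ≤ Filter.liminf (fun N : ℕ =>
        Real.sqrt (∑ n ∈ Finset.Icc 1 (N + 1), ‖b n‖ ^ 2)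
          / Real.sqrt (∑ n ∈ Finset.Icc 1 (N + 1), ‖a n‖ ^ 2)) atTop := by
  change 1 / (1 + ‖lam‖) ≤
    liminf (fun N => l2NormOn (Icc 1 (N + 1)) b / l2NormOn (Icc 1 (N + 1)) a) atTop
  have hb0 : b 0 = 0 := by simp [hb 0]
  have ha_eq (N : ℕ) : l2NormOn (Icc 1 (N + 1)) a
      = l2NormOn (Icc 1 (N + 1)) (fun n => b n - lam * b (n - 1)) := by
    refine l2NormOn_congr fun n hn => ?_
    obtain ⟨m, rfl⟩ := Nat.exists_eq_add_of_le' (mem_Icc.mp hn).1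
    rw [hb, hb, sum_Icc_pow_sub_mul_succ, Nat.add_sub_cancel, add_sub_cancel_left]
  have hupper (N : ℕ) :
      l2NormOn (Icc 1 (N + 1)) b / l2NormOn (Icc 1 (N + 1)) a ≤ 1 / (1 - ‖lam‖) := by
    rcases (l2NormOn_nonneg (s := Icc 1 (N + 1)) (f := a)).eq_or_lt with hzero | hpos
    · rw [← hzero, div_zero]
      exact one_div_nonneg.mpr (sub_nonneg.mpr hlam.le)
    · rw [div_le_div_iff₀ hpos (sub_pos.mpr hlam), one_mul, mul_comm, ha_eq]
      exact one_sub_mul_l2NormOn_le lam hb0 N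
  obtain ⟨n₀, hn₀⟩ : ∃ n, a (n + 1) ≠ 0 := by
    contrapose! ha
    simp [ha]
  have hlower : ∀ᶠ N in atTop,
      1 / (1 + ‖lam‖) ≤ l2NormOn (Icc 1 (N + 1)) b / l2NormOn (Icc 1 (N + 1)) a := by
    filter_upwards [eventually_ge_atTop n₀] with N hN
    have hpos : 0 < l2NormOn (Icc 1 (N + 1)) a :=
      l2NormOn_pos (mem_Icc.mpr ⟨by omega, by omega⟩) hn₀
    rw [div_le_div_iff₀ (by positivity) hpos, one_mul, mul_comm, ha_eq]
    exact l2NormOn_sub_mul_le lam hb0 N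
  exact le_liminf_of_le (isCoboundedUnder_ge_of_le atTop hupper) hlower

theorem stmt_5 (lam : ℂ) (hlam : ‖lam‖ < 1) (a b : ℕ → ℂ)
    (hb : ∀ n, b n = ∑ k ∈ Finset.Icc 1 n, lam ^ (n - k) * a k)
    (ha : ¬ Summable (fun n => ‖a (n + 1)‖ ^ 2))
    (haLind : Tendsto (fun N : ℕ =>
        ((Finset.Icc 1 (N + 1)).sup' (Finset.nonempty_Icc.mpr (Nat.le_add_left 1 N))
            (fun n => ‖a n‖))
          / Real.sqrt (∑ n ∈ Finset.Icc 1 (N + 1), ‖a n‖ ^ 2)) atTop (nhds 0)) :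
    1 / (1 + ‖lam‖) ≤ Filter.liminf (fun N : ℕ =>
        Real.sqrt (∑ n ∈ Finset.Icc 1 (N + 1), ‖b n‖ ^ 2)
          / Real.sqrt (∑ n ∈ Finset.Icc 1 (N + 1), ‖a n‖ ^ 2)) atTop :=
  stmt_5_general lam hlam a b hb ha
end

section
/- Let f be an inner function with f(0) = 0, λ = conj(f'(0)), μ = conj(f''(0))/2, and Yₙ = f^{∘n} − λ f^{∘(n+1)}. Then E[Yₙ² | 𝓕_{n+1}] = μ·f^{∘(n+1)} almost everywhere on 𝕋. -/
/-!
Write `b`, `c` for the boundary values of `F = f^[n]` and `f ∘ F`, and put `u = dslope f 0`,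
`v = dslope u 0`, so that `f z = z u(z)` and `u(z) = f'(0) + z v(z)`. The map
`(F, u ∘ F, v ∘ F)` is holomorphic and bounded on the disc with radial limits
`(b, c/b, (c/b - f'(0))/b)`, so by the mean value property and dominated convergence
`∫ P(b, c/b, (c/b - f'(0))/b) = P(0, f'(0), f''(0)/2)` for every entire `P : ℂ³ → ℂ`.
Since `conj = inv` on the circle, every mixed moment `∫ c^j c̄^k D` of
`D = (b - λc)² - μc`, or its conjugate, is a combination of such integrals, and all of them
vanish. Stone–Weierstrass on the circle turns this into `∫ φ(c) D = 0` for continuous `φ`,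
and density of bounded continuous functions in `L¹` of the law of `c` under `‖D‖ dθ` into
`∫_{c ∈ A} D = 0` for Borel `A`. Thus `E[D | c] = 0`, and `E[(b - λc)² | c] = μc`.
-/

open MeasureTheory Filter

noncomputable def circleMeasure : Measure ℝ :=
  (ENNReal.ofReal (2 * Real.pi))⁻¹ • (volume.restrict (Set.Ioc 0 (2 * Real.pi)))

open Metric Set Complex Topology ComplexConjugate BoundedContinuousFunction

instance isProbabilityMeasure_circleMeasure : IsProbabilityMeasure circleMeasure := by
  constructor
  simp only [circleMeasure, Measure.smul_apply, Measure.restrict_apply MeasurableSet.univ,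
    univ_inter, Real.volume_Ioc, sub_zero, smul_eq_mul]
  exact ENNReal.inv_mul_cancel (by simp [Real.pi_pos]) ENNReal.ofReal_ne_top

theorem integral_circleMeasure {E : Type*} [NormedAddCommGroup E] [NormedSpace ℝ E]
    (g : ℝ → E) : ∫ θ, g θ ∂circleMeasure = (2 * Real.pi)⁻¹ • ∫ θ in 0..2 * Real.pi, g θ := by
  rw [circleMeasure, integral_smul_measure, intervalIntegral.integral_of_le Real.two_pi_pos.le,
    ENNReal.toReal_inv, ENNReal.toReal_ofReal Real.two_pi_pos.le]

theorem mul_exp_mem_ball {r : ℝ} (hr₀ : 0 ≤ r) (hr₁ : r < 1) (θ : ℝ) :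
    (r : ℂ) * exp (θ * I) ∈ ball (0 : ℂ) 1 := by
  simpa [norm_exp_ofReal_mul_I, abs_of_nonneg hr₀] using hr₁

theorem integral_circleMeasure_comp_mul_exp {h : ℂ → ℂ} (hh : DifferentiableOn ℂ h (ball 0 1))
    {r : ℝ} (hr₀ : 0 ≤ r) (hr₁ : r < 1) :
    ∫ θ, h (r * exp (θ * I)) ∂circleMeasure = h 0 := by
  have hcl : DiffContOnCl ℂ h (ball 0 |r|) :=
    hh.diffContOnCl_ball (closedBall_subset_ball (by rwa [abs_of_nonneg hr₀]))
  rw [← hcl.circleAverage, Real.circleAverage, integral_circleMeasure]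
  simp [circleMap]

def HasRadialLimits {E : Type*} [TopologicalSpace E] (h : ℂ → E) (H : ℝ → E) : Prop :=
  ∀ᵐ (θ : ℝ) ∂circleMeasure,
    Tendsto (fun r : ℝ => h ((r : ℂ) * exp ((θ : ℂ) * I))) (𝓝[<] 1) (𝓝 (H θ))

namespace HasRadialLimits

variable {E E' : Type*} [TopologicalSpace E] [TopologicalSpace E'] {h : ℂ → E} {H : ℝ → E}

theorem comp {g : E → E'} (hg : Continuous g) (hh : HasRadialLimits h H) :
    HasRadialLimits (g ∘ h) (g ∘ H) := by
  unfold HasRadialLimits at *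
  filter_upwards [hh] with θ hθ using (hg.tendsto _).comp hθ

theorem prodMk {h' : ℂ → E'} {H' : ℝ → E'} (hh : HasRadialLimits h H)
    (hh' : HasRadialLimits h' H') :
    HasRadialLimits (fun z => (h z, h' z)) (fun θ => (H θ, H' θ)) := by
  unfold HasRadialLimits at *
  filter_upwards [hh, hh'] with θ hθ hθ' using hθ.prodMk_nhds hθ'

theorem dslope_comp {F g : ℂ → ℂ} {b c : ℝ → ℂ} {a : ℂ} (hF : HasRadialLimits F b)
    (hb : ∀ᵐ θ ∂circleMeasure, b θ ≠ a) (hg : HasRadialLimits (g ∘ F) c) :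
    HasRadialLimits (dslope g a ∘ F) (fun θ => (c θ - g a) / (b θ - a)) := by
  unfold HasRadialLimits at *
  filter_upwards [hF, hb, hg] with θ hFθ hbθ hgθ
  refine ((hgθ.sub_const _).div (hFθ.sub_const _) (sub_ne_zero.2 hbθ)).congr' ?_
  filter_upwards [hFθ.eventually_ne hbθ] with r hr
  simp [dslope_of_ne _ hr, slope_def_field]

theorem integral_eq {h : ℂ → ℂ} {H : ℝ → ℂ} (hH : HasRadialLimits h H)
    (hh : DifferentiableOn ℂ h (ball 0 1)) {M : ℝ} (hM : ∀ z ∈ ball (0 : ℂ) 1, ‖h z‖ ≤ M) :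
    Integrable H circleMeasure ∧ ∫ θ, H θ ∂circleMeasure = h 0 := by
  unfold HasRadialLimits at hH
  obtain ⟨r, -, hr, hr1⟩ := exists_seq_strictMono_tendsto' (zero_lt_one' ℝ)
  have hr1' : Tendsto r atTop (𝓝[<] 1) :=
    tendsto_nhdsWithin_of_tendsto_nhds_of_eventually_within _ hr1 (.of_forall fun k => (hr k).2)
  have hball : ∀ k (θ : ℝ), (r k : ℂ) * exp (θ * I) ∈ ball (0 : ℂ) 1 :=
    fun k => mul_exp_mem_ball (hr k).1.le (hr k).2
  set G : ℕ → ℝ → ℂ := fun k θ => h (r k * exp (θ * I))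
  have hGmeas : ∀ k, AEStronglyMeasurable (G k) circleMeasure := fun k =>
    (hh.continuousOn.comp_continuous (by fun_prop) (hball k)).aestronglyMeasurable
  have hGbound : ∀ k, ∀ᵐ θ ∂circleMeasure, ‖G k θ‖ ≤ M :=
    fun k => .of_forall fun θ => hM _ (hball k θ)
  have hGH : ∀ᵐ θ ∂circleMeasure, Tendsto (fun k => G k θ) atTop (𝓝 (H θ)) := by
    filter_upwards [hH] with θ hθ using hθ.comp hr1'
  have hHbound : ∀ᵐ θ ∂circleMeasure, ‖H θ‖ ≤ M := by
    filter_upwards [hGH] with θ hθ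
    exact le_of_tendsto hθ.norm (.of_forall fun k => hM _ (hball k θ))
  refine ⟨.of_bound (aestronglyMeasurable_of_tendsto_ae _ hGmeas hGH) M hHbound,
    tendsto_nhds_unique (tendsto_integral_of_dominated_convergence _ hGmeas
      (integrable_const M) hGbound hGH) ?_⟩
  simp only [G, integral_circleMeasure_comp_mul_exp hh (hr _).1.le (hr _).2, tendsto_const_nhds]

end HasRadialLimits

theorem deriv_dslope_self {f : ℂ → ℂ} {s : Set ℂ} {a : ℂ} (hs : IsOpen s) (ha : a ∈ s)
    (hf : DifferentiableOn ℂ f s) : deriv (dslope f a) a = deriv (deriv f) a / 2 := by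
  set u := dslope f a
  have hu : DifferentiableOn ℂ u s := (differentiableOn_dslope (hs.mem_nhds ha)).2 hf
  have hfu : f = fun w => f a + (w - a) * u w :=
    funext fun w => by rw [← smul_eq_mul, sub_smul_dslope]; ring
  have hderiv : deriv f =ᶠ[𝓝 a] fun z => u z + (z - a) * deriv u z := by
    filter_upwards [hs.mem_nhds ha] with z hz
    have h : HasDerivAt (fun w => f a + (w - a) * u w) (1 * u z + (z - a) * deriv u z) z :=
      (((hasDerivAt_id z).sub_const a).mul
        (hu.differentiableAt (hs.mem_nhds hz)).hasDerivAt).const_add (f a)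
    rw [← hfu] at h
    rw [h.deriv, one_mul]
  have hu' : DifferentiableAt ℂ (deriv u) a :=
    ((hu.analyticOnNhd hs).deriv a ha).differentiableAt
  have h : HasDerivAt (fun z => u z + (z - a) * deriv u z)
      (deriv u a + (1 * deriv u a + (a - a) * deriv (deriv u) a)) a :=
    (hu.differentiableAt (hs.mem_nhds ha)).hasDerivAt.add
      (((hasDerivAt_id a).sub_const a).mul hu'.hasDerivAt)
  rw [hderiv.deriv_eq, h.deriv]
  ring

theorem mapsTo_dslope_zero {f : ℂ → ℂ} {R : ℝ} (hf : DifferentiableOn ℂ f (ball 0 1))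
    (hmaps : MapsTo f (ball 0 1) (closedBall 0 R)) :
    MapsTo (dslope f 0) (ball 0 1) (closedBall 0 (R + ‖f 0‖)) := by
  intro z hz
  have hmaps' : MapsTo f (ball 0 1) (closedBall (f 0) (R + ‖f 0‖)) :=
    hmaps.mono_right fun w hw => by
      rw [mem_closedBall_zero_iff] at hw
      rw [mem_closedBall, dist_eq_norm]
      linarith [norm_sub_le w (f 0)]
  simpa using Complex.norm_dslope_le_div_of_mapsTo_ball hf hmaps' hz

theorem MeasureTheory.Integrable.conj {α : Type*} [MeasurableSpace α] {μ : Measure α}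
    {f : α → ℂ} (hf : Integrable f μ) : Integrable (fun x => conj (f x)) μ :=
  (integrable_norm_iff (by fun_prop)).1 (by simpa using hf.norm)

theorem ae_ne_zero_of_norm_eq_one {α : Type*} [MeasurableSpace α] {μ : Measure α}
    {f : α → ℂ} (hf : ∀ᵐ x ∂μ, ‖f x‖ = 1) : ∀ᵐ x ∂μ, f x ≠ 0 :=
  hf.mono fun _ hx => norm_ne_zero_iff.1 (by simp [hx])

theorem pow_add_mul_conj_pow {z : ℂ} (hz : ‖z‖ = 1) (k m : ℕ) :
    z ^ (k + m) * conj z ^ k = z ^ m := by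
  rw [pow_add, mul_right_comm, ← mul_pow, mul_conj', hz]
  simp

theorem pow_mul_conj_pow_add {z : ℂ} (hz : ‖z‖ = 1) (j p : ℕ) :
    z ^ j * conj z ^ (j + p) = conj z ^ p := by
  rw [pow_add, ← mul_assoc, ← mul_pow, mul_conj', hz]
  simp

section BoundaryValues

variable {f F : ℂ → ℂ} {b c : ℝ → ℂ}
  (hf : DifferentiableOn ℂ f (ball 0 1)) (hfmaps : MapsTo f (ball 0 1) (ball 0 1))
  (hf0 : f 0 = 0) (hF : DifferentiableOn ℂ F (ball 0 1))
  (hFmaps : MapsTo F (ball 0 1) (ball 0 1)) (hF0 : F 0 = 0)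
  (hb : HasRadialLimits F b) (hc : HasRadialLimits (f ∘ F) c)

include hf hfmaps hf0 hF hFmaps hF0 hb hc

theorem integral_comp_radialLimits (hb0 : ∀ᵐ θ ∂circleMeasure, b θ ≠ 0)
    (P : ℂ × ℂ × ℂ → ℂ) (hP : Differentiable ℂ P) :
    Integrable (fun θ => P (b θ, c θ / b θ, (c θ / b θ - deriv f 0) / b θ)) circleMeasure ∧
      ∫ θ, P (b θ, c θ / b θ, (c θ / b θ - deriv f 0) / b θ) ∂circleMeasure =
        P (0, deriv f 0, deriv (deriv f) 0 / 2) := by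
  set u := dslope f 0
  set v := dslope u 0
  have hu : DifferentiableOn ℂ u (ball 0 1) :=
    (differentiableOn_dslope (ball_mem_nhds 0 one_pos)).2 hf
  have hv : DifferentiableOn ℂ v (ball 0 1) :=
    (differentiableOn_dslope (ball_mem_nhds 0 one_pos)).2 hu
  have humaps := mapsTo_dslope_zero hf (hfmaps.mono_right ball_subset_closedBall)
  have hvmaps := mapsTo_dslope_zero hu humaps
  have hG : DifferentiableOn ℂ (fun z => (F z, u (F z), v (F z))) (ball 0 1) :=
    hF.prodMk ((hu.comp hF hFmaps).prodMk (hv.comp hF hFmaps))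
  obtain ⟨M, hM⟩ := ((isCompact_closedBall (0 : ℂ) 1).prod ((isCompact_closedBall _ _).prod
    (isCompact_closedBall _ _))).exists_bound_of_continuousOn hP.continuous.continuousOn
  have hulim : HasRadialLimits (u ∘ F) fun θ => c θ / b θ := by
    simpa only [hf0, sub_zero] using hb.dslope_comp hb0 hc
  have hvlim : HasRadialLimits (v ∘ F) fun θ => (c θ / b θ - deriv f 0) / b θ := by
    simpa only [u, dslope_same, sub_zero] using hb.dslope_comp hb0 hulim
  have h := ((hb.prodMk (hulim.prodMk hvlim)).comp hP.continuous).integral_eq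
    (hP.comp_differentiableOn hG) fun z hz => hM _
      ⟨ball_subset_closedBall (hFmaps hz), humaps (hFmaps hz), hvmaps (hFmaps hz)⟩
  simpa [Function.comp_def, hF0, u, v,
    deriv_dslope_self isOpen_ball (mem_ball_self one_pos) hf] using h

theorem integral_pow_mul_sq_sub_eq_zero (hb0 : ∀ᵐ θ ∂circleMeasure, b θ ≠ 0) (lam mu : ℂ)
    (m : ℕ) :
    Integrable (fun θ => c θ ^ m * ((b θ - lam * c θ) ^ 2 - mu * c θ)) circleMeasure ∧
      ∫ θ, c θ ^ m * ((b θ - lam * c θ) ^ 2 - mu * c θ) ∂circleMeasure = 0 := by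
  have h := integral_comp_radialLimits hf hfmaps hf0 hF hFmaps hF0 hb hc hb0
    (fun p => (p.1 * p.2.1) ^ m * ((p.1 - lam * (p.1 * p.2.1)) ^ 2 - mu * (p.1 * p.2.1)))
    (by fun_prop)
  have hae : (fun θ => (b θ * (c θ / b θ)) ^ m *
      ((b θ - lam * (b θ * (c θ / b θ))) ^ 2 - mu * (b θ * (c θ / b θ)))) =ᵐ[circleMeasure]
      fun θ => c θ ^ m * ((b θ - lam * c θ) ^ 2 - mu * c θ) := by
    filter_upwards [hb0] with θ hθ
    rw [mul_div_cancel₀ _ hθ]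
  refine ⟨h.1.congr hae, (integral_congr_ae hae).symm.trans ?_⟩
  simpa using h.2

variable (hb1 : ∀ᵐ θ ∂circleMeasure, ‖b θ‖ = 1) (hc1 : ∀ᵐ θ ∂circleMeasure, ‖c θ‖ = 1)
  {lam mu : ℂ} (hlam : lam = conj (deriv f 0))

include hb1 hc1 hlam

theorem integral_conj_mul_sq_sub_eq_zero (hmu : mu = conj (deriv (deriv f) 0) / 2) :
    ∫ θ, conj (c θ) * ((b θ - lam * c θ) ^ 2 - mu * c θ) ∂circleMeasure = 0 := by
  have hb0 := ae_ne_zero_of_norm_eq_one hb1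
  have hV := integral_comp_radialLimits hf hfmaps hf0 hF hFmaps hF0 hb hc hb0
    (fun p => p.2.2) (by fun_prop)
  have hP := integral_comp_radialLimits hf hfmaps hf0 hF hFmaps hF0 hb hc hb0
    (fun p => -lam * p.1 + lam ^ 2 * (p.1 * p.2.1) - mu) (by fun_prop)
  -- the only term of `c̄ D` that is not a boundary value of a holomorphic function is `b² c̄`,
  -- which is `conj ((c/b - f'(0))/b) + λ b`
  have hae : (fun θ => conj ((c θ / b θ - deriv f 0) / b θ) +
      (-lam * b θ + lam ^ 2 * (b θ * (c θ / b θ)) - mu)) =ᵐ[circleMeasure]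
      fun θ => conj (c θ) * ((b θ - lam * c θ) ^ 2 - mu * c θ) := by
    filter_upwards [hb1, hc1, hb0, ae_ne_zero_of_norm_eq_one hc1] with θ hbθ hcθ hb0 hc0
    simp only [map_div₀, map_sub, ← inv_eq_conj hbθ, ← inv_eq_conj hcθ, ← hlam]
    field_simp
    ring
  rw [← integral_congr_ae hae, integral_add hV.1.conj hP.1, integral_conj, hV.2, hP.2, hmu]
  simp [map_ofNat]

theorem integral_conj_pow_mul_sq_sub_eq_zero (p : ℕ) :
    ∫ θ, conj (c θ) ^ (p + 2) * ((b θ - lam * c θ) ^ 2 - mu * c θ) ∂circleMeasure = 0 := by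
  have hb0 := ae_ne_zero_of_norm_eq_one hb1
  have hP := integral_comp_radialLimits hf hfmaps hf0 hF hFmaps hF0 hb hc hb0
    (fun q => (q.1 * q.2.1) ^ p * (q.2.1 - deriv f 0) ^ 2 - conj mu * (q.1 * q.2.1) ^ (p + 1))
    (by fun_prop)
  have hae : (fun θ => (b θ * (c θ / b θ)) ^ p * (c θ / b θ - deriv f 0) ^ 2 -
      conj mu * (b θ * (c θ / b θ)) ^ (p + 1)) =ᵐ[circleMeasure]
      fun θ => conj (conj (c θ) ^ (p + 2) * ((b θ - lam * c θ) ^ 2 - mu * c θ)) := by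
    filter_upwards [hb1, hc1, hb0, ae_ne_zero_of_norm_eq_one hc1] with θ hbθ hcθ hb0 hc0
    simp only [map_mul, map_sub, map_pow, conj_conj]
    simp only [← inv_eq_conj hbθ, ← inv_eq_conj hcθ, hlam, conj_conj]
    field_simp
    ring
  rw [← conj_conj (∫ θ, _ ∂circleMeasure), ← integral_conj, ← integral_congr_ae hae, hP.2]
  simp

theorem integral_pow_mul_conj_pow_mul_sq_sub_eq_zero (hmu : mu = conj (deriv (deriv f) 0) / 2)
    (j k : ℕ) :
    ∫ θ, c θ ^ j * conj (c θ) ^ k * ((b θ - lam * c θ) ^ 2 - mu * c θ) ∂circleMeasure = 0 := by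
  obtain ⟨m, rfl⟩ | ⟨p, rfl⟩ : (∃ m, j = k + m) ∨ ∃ p, k = j + p + 1 := by
    rcases le_or_gt k j with h | h
    · exact .inl ⟨j - k, by omega⟩
    · exact .inr ⟨k - j - 1, by omega⟩
  · rw [← (integral_pow_mul_sq_sub_eq_zero hf hfmaps hf0 hF hFmaps hF0 hb hc
      (ae_ne_zero_of_norm_eq_one hb1) lam mu m).2]
    refine integral_congr_ae ?_
    filter_upwards [hc1] with θ hθ
    rw [pow_add_mul_conj_pow hθ]
  · rcases p with _ | p
    · rw [← integral_conj_mul_sq_sub_eq_zero hf hfmaps hf0 hF hFmaps hF0 hb hc hb1 hc1 hlam hmu]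
      refine integral_congr_ae ?_
      filter_upwards [hc1] with θ hθ
      rw [add_assoc, pow_mul_conj_pow_add hθ, zero_add, pow_one]
    · rw [← integral_conj_pow_mul_sq_sub_eq_zero hf hfmaps hf0 hF hFmaps hF0 hb hc hb1 hc1 hlam p]
      refine integral_congr_ae ?_
      filter_upwards [hc1] with θ hθ
      rw [add_assoc, pow_mul_conj_pow_add hθ]

end BoundaryValues

theorem ContinuousLinearMap.eq_zero_of_forall_pow_mul_star_pow {K : Set ℂ} [CompactSpace K]
    (T : C(K, ℂ) →L[ℂ] ℂ)
    (h : ∀ j k : ℕ, T ((ContinuousMap.id ℂ).restrict K ^ j *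
      star ((ContinuousMap.id ℂ).restrict K) ^ k) = 0) :
    T = 0 := by
  set X := (ContinuousMap.id ℂ).restrict K
  have hadj : ∀ q ∈ StarAlgebra.adjoin ℂ {X}, T q = 0 := by
    intro q hq
    rw [← StarSubalgebra.mem_toSubalgebra, StarAlgebra.adjoin_toSubalgebra, Set.star_singleton,
      Set.singleton_union, ← Subalgebra.mem_toSubmodule, Algebra.adjoin_eq_span] at hq
    refine Submodule.span_le (p := LinearMap.ker (T : C(K, ℂ) →ₗ[ℂ] ℂ)) |>.2 ?_ hq
    rintro _ hm
    obtain ⟨j, k, rfl⟩ := (Submonoid.mem_closure_pair _ _ _).1 hm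
    exact h j k
  ext q
  have hq : q ∈ closure (StarAlgebra.adjoin ℂ {X} : Set C(K, ℂ)) := by
    rw [← StarSubalgebra.topologicalClosure_coe, ← StarAlgebra.elemental,
      ContinuousMap.elemental_id_eq_top]
    trivial
  exact closure_minimal hadj (isClosed_eq T.continuous continuous_const) hq

section Determinacy

variable {Ω : Type*} [MeasurableSpace Ω] {μ : Measure Ω} {D : Ω → ℂ}

theorem integral_comp_mul_eq_zero_of_moments {c : Ω → ℂ} {K : Set ℂ} (hK : IsCompact K)
    (hc : Measurable c) (hcK : ∀ᵐ ω ∂μ, c ω ∈ K) (hD : Integrable D μ)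
    (hmom : ∀ j k : ℕ, ∫ ω, c ω ^ j * conj (c ω) ^ k * D ω ∂μ = 0)
    {φ : ℂ → ℂ} (hφ : Continuous φ) : ∫ ω, φ (c ω) * D ω ∂μ = 0 := by
  classical
  have : CompactSpace K := isCompact_iff_compactSpace.1 hK
  let E : C(K, ℂ) → ℂ → ℂ := fun q z => if h : z ∈ K then q ⟨z, h⟩ else 0
  have hE_add : ∀ q q' z, E (q + q') z = E q z + E q' z := by
    intro q q' z; by_cases h : z ∈ K <;> simp [E, h]
  have hE_smul : ∀ (a : ℂ) q z, E (a • q) z = a * E q z := by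
    intro a q z; by_cases h : z ∈ K <;> simp [E, h]
  have hE_le : ∀ q z, ‖E q z‖ ≤ ‖q‖ := by
    intro q z; by_cases h : z ∈ K <;> simp [E, h, q.norm_coe_le_norm]
  have hint : ∀ q, Integrable (fun ω => E q (c ω) * D ω) μ := fun q =>
    hD.bdd_mul ((Measurable.dite q.continuous.measurable measurable_const
      hK.measurableSet).comp hc).aestronglyMeasurable (.of_forall fun ω => hE_le q _)
  let T : C(K, ℂ) →L[ℂ] ℂ := LinearMap.mkContinuous
    { toFun := fun q => ∫ ω, E q (c ω) * D ω ∂μ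
      map_add' := fun q q' => by
        simp only [hE_add, add_mul]
        exact integral_add (hint q) (hint q')
      map_smul' := fun a q => by
        simp only [hE_smul, mul_assoc, RingHom.id_apply, smul_eq_mul]
        exact integral_const_mul a _ }
    (∫ ω, ‖D ω‖ ∂μ) fun q => by
      rw [LinearMap.coe_mk, AddHom.coe_mk, mul_comm, ← integral_const_mul]
      exact norm_integral_le_of_norm_le (hD.norm.const_mul _) (.of_forall fun ω => by
        rw [norm_mul]; gcongr; exact hE_le q _)
  have hT := T.eq_zero_of_forall_pow_mul_star_pow fun j k => by
    rw [← hmom j k]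
    refine integral_congr_ae ?_
    filter_upwards [hcK] with ω hω
    simp [E, hω]
  have hφK := DFunLike.congr_fun hT ⟨fun z => φ z, by fun_prop⟩
  rw [zero_apply] at hφK
  rw [← hφK]
  refine integral_congr_ae ?_
  filter_upwards [hcK] with ω hω
  simp [E, hω]

variable {X : Type*} [PseudoMetricSpace X] [MeasurableSpace X] [BorelSpace X] {c : Ω → X}

theorem setIntegral_preimage_eq_zero_of_forall_integral_comp_mul (hc : Measurable c)
    (hD : Integrable D μ) (h : ∀ φ : X →ᵇ ℂ, ∫ ω, φ (c ω) * D ω ∂μ = 0)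
    {A : Set X} (hA : MeasurableSet A) : ∫ ω in c ⁻¹' A, D ω ∂μ = 0 := by
  set ν : Measure X := (μ.withDensity fun ω => ‖D ω‖ₑ).map c
  have : IsFiniteMeasure (μ.withDensity fun ω => ‖D ω‖ₑ) := isFiniteMeasure_withDensity hD.2.ne
  have hind : MemLp (A.indicator 1 : X → ℂ) 1 ν :=
    memLp_indicator_const 1 hA 1 (.inr (measure_ne_top _ _))
  refine enorm_eq_zero.1 (le_antisymm (ENNReal.le_of_forall_pos_le_add fun ε hε _ => ?_)
    zero_le)
  obtain ⟨g, hg, -⟩ := hind.exists_boundedContinuous_eLpNorm_sub_le ENNReal.one_ne_top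
    (ENNReal.coe_ne_zero.2 hε.ne')
  have hmeas : Measurable fun x => A.indicator (1 : X → ℂ) x - g x :=
    (measurable_const.indicator hA).sub g.continuous.measurable
  have hmeas' : Measurable fun ω => ‖A.indicator (1 : X → ℂ) (c ω) - g (c ω)‖ₑ :=
    (hmeas.comp hc).enorm
  have hg_int : Integrable (fun ω => g (c ω) * D ω) μ :=
    hD.bdd_mul (g.continuous.measurable.comp hc).aestronglyMeasurable
      (.of_forall fun ω => g.norm_coe_le_norm (c ω))
  calc ‖∫ ω in c ⁻¹' A, D ω ∂μ‖ₑ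
      = ‖∫ ω, (A.indicator 1 (c ω) - g (c ω)) * D ω ∂μ‖ₑ := by
        rw [← integral_indicator (hc hA), ← sub_zero (∫ ω, _ ∂μ), ← h g,
          ← integral_sub (hD.indicator (hc hA)) hg_int]
        congr 2 with ω
        by_cases hω : c ω ∈ A <;> simp [hω, sub_mul]
    _ ≤ ∫⁻ ω, ‖(A.indicator 1 (c ω) - g (c ω)) * D ω‖ₑ ∂μ := enorm_integral_le_lintegral_enorm _
    _ = eLpNorm (A.indicator 1 - ⇑g) 1 ν := by
        rw [eLpNorm_one_eq_lintegral_enorm]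
        simp only [Pi.sub_apply]
        rw [lintegral_map hmeas.enorm hc,
          lintegral_withDensity_eq_lintegral_mul₀ hD.1.enorm hmeas'.aemeasurable]
        simp [enorm_mul, mul_comm]
    _ ≤ ε := hg
    _ ≤ 0 + ε := by rw [zero_add]

theorem condExp_comap_eq_zero_of_forall_integral_comp_mul [IsFiniteMeasure μ]
    (hc : Measurable c) (hD : Integrable D μ) (h : ∀ φ : X →ᵇ ℂ, ∫ ω, φ (c ω) * D ω ∂μ = 0) :
    μ[D | MeasurableSpace.comap c inferInstance] =ᵐ[μ] 0 := by
  refine (ae_eq_condExp_of_forall_setIntegral_eq hc.comap_le hD (fun _ _ _ => integrableOn_zero)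
    ?_ aestronglyMeasurable_zero).symm
  rintro _ ⟨A, hA, rfl⟩ -
  simp [setIntegral_preimage_eq_zero_of_forall_integral_comp_mul hc hD h hA]

end Determinacy

theorem condExp_sub_mul_sq_comap_eq {f F : ℂ → ℂ} {b c : ℝ → ℂ}
    (hf : DifferentiableOn ℂ f (ball 0 1)) (hfmaps : MapsTo f (ball 0 1) (ball 0 1))
    (hf0 : f 0 = 0) (hF : DifferentiableOn ℂ F (ball 0 1))
    (hFmaps : MapsTo F (ball 0 1) (ball 0 1)) (hF0 : F 0 = 0)
    (hb : HasRadialLimits F b) (hc : HasRadialLimits (f ∘ F) c) (hcm : Measurable c)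
    (hb1 : ∀ᵐ θ ∂circleMeasure, ‖b θ‖ = 1) (hc1 : ∀ᵐ θ ∂circleMeasure, ‖c θ‖ = 1)
    {lam mu : ℂ} (hlam : lam = conj (deriv f 0)) (hmu : mu = conj (deriv (deriv f) 0) / 2) :
    circleMeasure[(fun θ => (b θ - lam * c θ) ^ 2) | MeasurableSpace.comap c inferInstance]
      =ᵐ[circleMeasure] fun θ => mu * c θ := by
  have hD := (integral_pow_mul_sq_sub_eq_zero hf hfmaps hf0 hF hFmaps hF0 hb hc
    (ae_ne_zero_of_norm_eq_one hb1) lam mu 0).1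
  simp only [pow_zero, one_mul] at hD
  have hDc := condExp_comap_eq_zero_of_forall_integral_comp_mul hcm hD fun φ =>
    integral_comp_mul_eq_zero_of_moments (isCompact_sphere 0 1) hcm
      (by filter_upwards [hc1] with θ hθ using by simpa using hθ) hD
      (integral_pow_mul_conj_pow_mul_sq_sub_eq_zero hf hfmaps hf0 hF hFmaps hF0 hb hc hb1 hc1
        hlam hmu) φ.continuous
  have hμc : Integrable (fun θ => mu * c θ) circleMeasure :=
    (Integrable.of_bound hcm.aestronglyMeasurable 1
      (by filter_upwards [hc1] with θ hθ using hθ.le)).const_mul mu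
  have hμc_meas : StronglyMeasurable[MeasurableSpace.comap c inferInstance]
      fun θ => mu * c θ :=
    (measurable_const.mul (comap_measurable c)).stronglyMeasurable
  calc circleMeasure[(fun θ => (b θ - lam * c θ) ^ 2) | MeasurableSpace.comap c inferInstance]
      = circleMeasure[(fun θ => (b θ - lam * c θ) ^ 2 - mu * c θ) + (fun θ => mu * c θ) |
          MeasurableSpace.comap c inferInstance] := by
        congr 1 with θ
        simp
    _ =ᵐ[circleMeasure] 0 + fun θ => mu * c θ := by
        refine (condExp_add hD hμc _).trans (hDc.add ?_)
        rw [condExp_of_stronglyMeasurable hcm.comap_le hμc_meas hμc]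
    _ = fun θ => mu * c θ := zero_add _

theorem stmt_13 (f : ℂ → ℂ)
    (hf : DifferentiableOn ℂ f (Metric.ball 0 1))
    (hmaps : Set.MapsTo f (Metric.ball 0 1) (Metric.ball 0 1))
    (hf0 : f 0 = 0)
    (B : ℕ → ℝ → ℂ)
    (hBmeas : ∀ n, Measurable (B n))
    (hBlim : ∀ n, 1 ≤ n → ∀ᵐ (θ : ℝ) ∂circleMeasure,
      Tendsto (fun r : ℝ => f^[n] ((r : ℂ) * Complex.exp ((θ : ℂ) * Complex.I)))
        (nhdsWithin 1 (Set.Iio 1)) (nhds (B n θ)))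
    (hBinner : ∀ n, 1 ≤ n → ∀ᵐ (θ : ℝ) ∂circleMeasure, ‖B n θ‖ = 1)
    (lam mu : ℂ) (hlam : lam = starRingEnd ℂ (deriv f 0))
    (hmu : mu = starRingEnd ℂ (deriv (deriv f) 0) / 2)
    (n : ℕ) (hn : 1 ≤ n) :
    circleMeasure[(fun θ => (B n θ - lam * B (n + 1) θ) ^ 2) |
        MeasurableSpace.comap (B (n + 1)) inferInstance]
      =ᵐ[circleMeasure] (fun θ => mu * B (n + 1) θ) := by
  have hc : HasRadialLimits (f ∘ f^[n]) (B (n + 1)) := by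
    rw [← Function.iterate_succ']
    exact hBlim (n + 1) (by omega)
  exact condExp_sub_mul_sq_comap_eq hf hmaps hf0 (hf.iterate hmaps n) (hmaps.iterate n)
    (Function.iterate_fixed hf0 n) (hBlim n hn) hc (hBmeas (n + 1)) (hBinner n hn)
    (hBinner (n + 1) (by omega)) hlam hmu
end
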